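/- arXiv:2105.12604 — 2 statements merged into one kernel-verified Lean document; each statement's English description precedes it below -/
import Mathlib

section
/- There exists a continuous group homomorphism f : lim_{[p]} Kˣ/q^ℤ → Kˣ/q'^ℤ with the following property: for every element (x_n)_{n≥0} of lim_{[p]} Kˣ/q^ℤ and every sequence (x̃_n)_{n≥0} in Kˣ with x̃_n ≡ x_n mod q^ℤ for all n, the sequence of classes (x̃_n^{p^n} mod q'^ℤ) converges to f((x_n)) in Kˣ/q'^ℤ. -/
/-- The `p`-adic universal cover `lim_{[p]} Kˣ/u^ℤ` of the Tate curve `Kˣ/u^ℤ`: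
the topological group of sequences `(xₙ)` in `Kˣ/u^ℤ` with `xₙ = x_{n+1}^p`,
topologized as a subgroup of the countable product. -/
def padicUniversalCover (K : Type*) [NormedField K] (p : ℕ) (u : Kˣ) :
    Subgroup (∀ _ : ℕ, Kˣ ⧸ Subgroup.zpowers u) where
  carrier := {x | ∀ n : ℕ, x n = x (n + 1) ^ p}
  one_mem' := by intro n; simp
  mul_mem' := by
    intro a b ha hb n
    simp only [Pi.mul_apply]
    rw [ha n, hb n]
    exact (mul_pow (a (n + 1)) (b (n + 1)) p).symm
  inv_mem' := by
    intro a ha n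
    simp only [Pi.inv_apply]
    rw [ha n]
    exact (inv_pow (a (n + 1)) p).symm

/-!
Write `q = q' ζ` with `‖ζ - 1‖ < 1` and fix `c < 1` bounding `‖p‖` and `‖ζ - 1‖`. By the binomial
theorem, `a ↦ a ^ p` shrinks `‖a - 1‖ ≤ c` by a factor `c`, so every `ζ ^ (pⁿ m)` lies within
`c ^ (n + 1)` of `1`. Modulo `q'^ℤ`, changing a lift `x̃ₙ` by `q ^ m` multiplies `x̃ₙ ^ pⁿ` by
`ζ ^ (pⁿ m)`. Hence consecutive terms of `x̃ₙ ^ pⁿ` differ by units tending to `1` geometrically,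
so the sequence converges in the complete field, and the limit does not depend on the lifts.
Since `q'^ℤ` is discrete, the quotient is Hausdorff and the limit is multiplicative in `x`.
If `x_N` has a lift within `c` of `1`, the limit lies within `c ^ (N + 1)` of `1`: continuity.
-/

open Filter Topology

section QuotientZPowers

variable {G : Type*} [CommGroup G]

theorem QuotientGroup.exists_mk_pow_eq_of_mk_eq {q q' ζ : G} (hq : q = q' * ζ) {a b : G}
    (hab : (a : G ⧸ Subgroup.zpowers q) = b) (N : ℕ) :
    ∃ m : ℤ, ((a ^ N : G) : G ⧸ Subgroup.zpowers q') = ↑(b ^ N) * ↑((ζ ^ N) ^ m) := by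
  obtain ⟨m, hm⟩ := Subgroup.mem_zpowers_iff.1 (QuotientGroup.eq.1 hab.symm)
  have ha : a = b * q' ^ m * ζ ^ m := by
    rw [mul_assoc, ← mul_zpow, ← hq, hm, mul_inv_cancel_left]
  have hq' : ((q' : G) : G ⧸ Subgroup.zpowers q') = 1 :=
    (QuotientGroup.eq_one_iff _).2 (Subgroup.mem_zpowers q')
  refine ⟨m, ?_⟩
  rw [ha, mul_pow, mul_pow, QuotientGroup.mk_mul, QuotientGroup.mk_mul,
    QuotientGroup.mk_pow _ (q' ^ m), QuotientGroup.mk_zpow, hq', one_zpow, one_pow, mul_one,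
    ← zpow_natCast (ζ ^ m), ← zpow_mul, mul_comm m, zpow_mul, zpow_natCast]

end QuotientZPowers

section NormedField

variable {K : Type*} [NormedField K]

theorem Units.norm_inv_sub_one {u : Kˣ} (hu : ‖(u : K)‖ = 1) :
    ‖((u⁻¹ : Kˣ) : K) - 1‖ = ‖(u : K) - 1‖ := by
  have : ((u⁻¹ : Kˣ) : K) - 1 = (u : K)⁻¹ * (1 - u) := by
    rw [Units.val_inv_eq_inv_val, mul_sub, mul_one, inv_mul_cancel₀ u.ne_zero]
  rw [this, norm_mul, norm_inv, hu, inv_one, one_mul, norm_sub_rev]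

theorem Units.nhds_one_hasBasis :
    (𝓝 (1 : Kˣ)).HasBasis (fun ε : ℝ => 0 < ε) fun ε => {u | ‖(u : K) - 1‖ < ε} := by
  rw [Units.isEmbedding_val₀.isInducing.nhds_eq_comap, Units.val_one]
  exact (Metric.nhds_basis_ball.comap _).congr (fun _ => Iff.rfl) fun _ _ => by
    ext; simp [dist_eq_norm]

theorem Units.tendsto_one_of_norm_sub_one_le {u : ℕ → Kˣ} {ε : ℕ → ℝ}
    (hε : Tendsto ε atTop (𝓝 0)) (hu : ∀ n, ‖(u n : K) - 1‖ ≤ ε n) :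
    Tendsto u atTop (𝓝 1) :=
  Units.nhds_one_hasBasis.tendsto_right_iff.2 fun _ hδ =>
    (hε.eventually (gt_mem_nhds hδ)).mono fun n hn => (hu n).trans_lt hn

variable [IsUltrametricDist K]

theorem norm_eq_one_of_norm_sub_one_lt_one {a : K} (h : ‖a - 1‖ < 1) : ‖a‖ = 1 := by
  simpa [max_eq_right h.le] using
    IsUltrametricDist.norm_add_eq_max_of_norm_ne_norm (x := a - 1) (y := 1) (by simpa using h.ne)

theorem norm_mul_sub_one_le_max {a b : K} (ha : ‖a‖ ≤ 1) :
    ‖a * b - 1‖ ≤ max ‖a - 1‖ ‖b - 1‖ :=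
  calc ‖a * b - 1‖ = ‖a * (b - 1) + (a - 1)‖ := by ring_nf
    _ ≤ max ‖a * (b - 1)‖ ‖a - 1‖ := IsUltrametricDist.norm_add_le_max _ _
    _ ≤ max ‖a - 1‖ ‖b - 1‖ := by
      rw [max_comm, norm_mul]
      gcongr
      exact mul_le_of_le_one_left (norm_nonneg _) ha

theorem Units.norm_zpow_sub_one_le {u : Kˣ} (hu : ‖(u : K) - 1‖ < 1) (m : ℤ) :
    ‖((u ^ m : Kˣ) : K) - 1‖ ≤ ‖(u : K) - 1‖ := by
  have hu₁ := norm_eq_one_of_norm_sub_one_lt_one hu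
  have hmul : ∀ k : ℤ, ∀ v : Kˣ, ‖((u ^ k : Kˣ) : K) - 1‖ ≤ ‖(u : K) - 1‖ →
      ‖(v : K) - 1‖ ≤ ‖(u : K) - 1‖ → ‖((u ^ k * v : Kˣ) : K) - 1‖ ≤ ‖(u : K) - 1‖ :=
    fun k v hk hv => (norm_mul_sub_one_le_max
      (norm_eq_one_of_norm_sub_one_lt_one (hk.trans_lt hu)).le).trans (max_le hk hv)
  induction m using Int.induction_on with
  | zero => simp
  | succ k ih => rw [zpow_add_one]; exact hmul _ _ ih le_rfl
  | pred k ih => rw [zpow_sub_one]; exact hmul _ _ ih (Units.norm_inv_sub_one hu₁).le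

theorem norm_pow_prime_sub_one_le {p : ℕ} (hp : p.Prime) {a : K} (ha : ‖a - 1‖ ≤ 1) :
    ‖a ^ p - 1‖ ≤ max (‖(p : K)‖ * ‖a - 1‖) (‖a - 1‖ ^ p) := by
  have hsum : ‖∑ k ∈ Finset.Ioo 0 p,
      (a - 1) ^ (k - 1) * 1 ^ (p - k - 1) * ((p.choose k / p : ℕ) : K)‖ ≤ 1 :=
    IsUltrametricDist.norm_sum_le_of_forall_le_of_nonneg zero_le_one fun k _ => by
      rw [one_pow, mul_one, norm_mul, norm_pow]
      exact mul_le_one₀ (pow_le_one₀ (norm_nonneg _) ha) (norm_nonneg _)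
        (IsUltrametricDist.norm_natCast_le_one K _)
  rw [← sub_add_cancel a 1, add_pow_prime_eq hp, one_pow, add_sub_cancel_right, add_right_comm,
    add_sub_cancel_right, add_comm]
  refine (IsUltrametricDist.norm_add_le_max _ _).trans (max_le_max ?_ (norm_pow _ _).le)
  rw [mul_one, norm_mul, norm_mul]
  exact mul_le_of_le_one_right (by positivity) hsum

theorem norm_pow_prime_pow_sub_one_le {p : ℕ} (hp : p.Prime) {c : ℝ} (hc : c ≤ 1)
    (hpc : ‖(p : K)‖ ≤ c) {a : K} (ha : ‖a - 1‖ ≤ c) (n : ℕ) :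
    ‖a ^ p ^ n - 1‖ ≤ c ^ (n + 1) := by
  have hc₀ : 0 ≤ c := (norm_nonneg _).trans hpc
  induction n with
  | zero => simpa using ha
  | succ n ih =>
    set s := ‖a ^ p ^ n - 1‖
    have hs : s ≤ c := ih.trans (pow_le_of_le_one hc₀ hc n.succ_ne_zero)
    rw [pow_succ, pow_mul]
    refine (norm_pow_prime_sub_one_le hp (hs.trans hc)).trans (max_le ?_ ?_)
    · rw [pow_succ' c]
      gcongr
    · calc s ^ p ≤ s ^ 2 := pow_le_pow_of_le_one (norm_nonneg _) (hs.trans hc) hp.two_le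
        _ = s * s := sq s
        _ ≤ c * c ^ (n + 1) := by gcongr
        _ = c ^ (n + 1 + 1) := (pow_succ' c _).symm

theorem Units.norm_zpow_pow_prime_pow_sub_one_le {p : ℕ} (hp : p.Prime) {c : ℝ} (hc : c < 1)
    (hpc : ‖(p : K)‖ ≤ c) {ζ : Kˣ} (hζ : ‖(ζ : K) - 1‖ ≤ c) (n : ℕ) (m : ℤ) :
    ‖(((ζ ^ p ^ n) ^ m : Kˣ) : K) - 1‖ ≤ c ^ (n + 1) := by
  have h := norm_pow_prime_pow_sub_one_le hp hc.le hpc hζ n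
  rw [← Units.val_pow_eq_pow_val] at h
  exact (Units.norm_zpow_sub_one_le (h.trans_lt (pow_lt_one₀ ((norm_nonneg _).trans hpc) hc
    n.succ_ne_zero)) m).trans h

theorem Units.exists_tendsto_prod_range [CompleteSpace K] {u : ℕ → Kˣ} {r c : ℝ} (hr : r < 1)
    (hc₀ : 0 ≤ c) (hc : c < 1) (hu : ∀ n, ‖(u n : K) - 1‖ ≤ r * c ^ n) :
    ∃ v : Kˣ, ‖(v : K) - 1‖ ≤ r ∧
      Tendsto (fun n => ∏ i ∈ Finset.range n, u i) atTop (𝓝 v) := by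
  set P : ℕ → Kˣ := fun n => ∏ i ∈ Finset.range n, u i
  have hr₀ : 0 ≤ r := by simpa using (norm_nonneg _).trans (hu 0)
  have hu_le : ∀ n, ‖(u n : K) - 1‖ ≤ r := fun n =>
    (hu n).trans (mul_le_of_le_one_right hr₀ (pow_le_one₀ hc₀ hc.le))
  have hP : ∀ n, ‖(P n : K) - 1‖ ≤ r := by
    intro n
    induction n with
    | zero => simpa [P] using hr₀
    | succ n ih =>
      simp only [P, Finset.prod_range_succ, Units.val_mul]
      exact (norm_mul_sub_one_le_max
        (norm_eq_one_of_norm_sub_one_lt_one (ih.trans_lt hr)).le).trans (max_le ih (hu_le n))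
  have hdist : ∀ n, dist (P n : K) (P (n + 1)) ≤ r * c ^ n := by
    intro n
    have : (P n : K) - P (n + 1) = P n * (1 - u n) := by
      simp only [P, Finset.prod_range_succ, Units.val_mul]; ring
    rw [dist_eq_norm, this, norm_mul, norm_eq_one_of_norm_sub_one_lt_one ((hP n).trans_lt hr),
      one_mul, norm_sub_rev]
    exact hu n
  obtain ⟨L, hL⟩ := cauchySeq_tendsto_of_complete (cauchySeq_of_le_geometric c r hc hdist)
  have hL₁ : ‖L - 1‖ ≤ r := le_of_tendsto (hL.sub_const 1).norm (Eventually.of_forall hP)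
  have hL₀ : L ≠ 0 := by
    rintro rfl
    simp at hL₁
    linarith
  refine ⟨Units.mk0 L hL₀, hL₁, ?_⟩
  rw [Units.isEmbedding_val₀.isInducing.tendsto_nhds_iff]
  exact hL

theorem Units.discreteTopology_zpowers {q : Kˣ} (hq : ‖(q : K)‖ ≠ 1) :
    DiscreteTopology (Subgroup.zpowers q) := by
  rw [discreteTopology_iff_isOpen_singleton_one]
  have hopen : IsOpen {u : Kˣ | ‖(u : K) - 1‖ < 1} :=
    isOpen_lt (by fun_prop) continuous_const
  convert hopen.preimage continuous_subtype_val
  ext ⟨u, k, rfl⟩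
  simp only [Set.mem_singleton_iff, Set.mem_preimage, Set.mem_ofPred_eq]
  constructor
  · intro h
    rw [Subtype.ext_iff] at h
    simp [show ((q ^ k : Kˣ) : K) = 1 by simpa using congrArg Units.val h]
  · intro h
    have hk : ‖(q : K)‖ ^ k = 1 := by
      rw [← norm_zpow, ← Units.val_zpow_eq_zpow_val]
      exact norm_eq_one_of_norm_sub_one_lt_one h
    rw [zpow_eq_one_iff_right₀ (norm_nonneg _) hq] at hk
    ext
    simp [hk]

theorem QuotientGroup.exists_tendsto_of_eq_mul_mk [CompleteSpace K] {H : Subgroup Kˣ}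
    {Y : ℕ → Kˣ ⧸ H} {u : ℕ → Kˣ} {r c : ℝ} (hr : r < 1) (hc₀ : 0 ≤ c) (hc : c < 1)
    (hu : ∀ n, ‖(u n : K) - 1‖ ≤ r * c ^ n) (hY : ∀ n, Y (n + 1) = Y n * u n) :
    ∃ v : Kˣ, ‖(v : K) - 1‖ ≤ r ∧ Tendsto Y atTop (𝓝 (Y 0 * v)) := by
  obtain ⟨v, hv, hlim⟩ := Units.exists_tendsto_prod_range hr hc₀ hc hu
  have hYprod : ∀ n, Y n = Y 0 * ↑(∏ i ∈ Finset.range n, u i) := by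
    intro n
    induction n with
    | zero => rw [Finset.prod_range_zero, QuotientGroup.mk_one, mul_one (Y 0)]
    | succ n ih => rw [hY, ih, Finset.prod_range_succ, QuotientGroup.mk_mul, mul_assoc]
  exact ⟨v, hv, (tendsto_congr hYprod).2 <|
    ((QuotientGroup.continuous_mk.tendsto v).comp hlim).const_mul (Y 0)⟩

end NormedField

namespace padicUniversalCover

variable {K : Type*} [NormedField K] [IsUltrametricDist K] {p : ℕ} {q q' ζ : Kˣ} {c : ℝ}

theorem exists_mk_pow_succ_eq_mul (hp : p.Prime) (hc : c < 1) (hpc : ‖(p : K)‖ ≤ c)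
    (hζ : ‖(ζ : K) - 1‖ ≤ c) (hqζ : q = q' * ζ) (x : padicUniversalCover K p q) {xt : ℕ → Kˣ}
    (hxt : ∀ n, (xt n : Kˣ ⧸ Subgroup.zpowers q) = x.1 n) (n : ℕ) :
    ∃ u : Kˣ, ‖(u : K) - 1‖ ≤ c ^ (n + 1) ∧
      ((xt (n + 1) ^ p ^ (n + 1) : Kˣ) : Kˣ ⧸ Subgroup.zpowers q') = ↑(xt n ^ p ^ n) * ↑u := by
  have hlift : ((xt (n + 1) ^ p : Kˣ) : Kˣ ⧸ Subgroup.zpowers q) = xt n := by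
    rw [QuotientGroup.mk_pow, hxt, hxt, x.2 n]
  obtain ⟨m, hm⟩ := QuotientGroup.exists_mk_pow_eq_of_mk_eq hqζ hlift (p ^ n)
  refine ⟨(ζ ^ p ^ n) ^ m, Units.norm_zpow_pow_prime_pow_sub_one_le hp hc hpc hζ n m, ?_⟩
  rwa [pow_succ', pow_mul]

theorem exists_tendsto_mk_pow [CompleteSpace K] (hp : p.Prime) (hc : c < 1)
    (hpc : ‖(p : K)‖ ≤ c) (hζ : ‖(ζ : K) - 1‖ ≤ c) (hqζ : q = q' * ζ)
    (x : padicUniversalCover K p q) {xt : ℕ → Kˣ}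
    (hxt : ∀ n, (xt n : Kˣ ⧸ Subgroup.zpowers q) = x.1 n) (N : ℕ) :
    ∃ v : Kˣ, ‖(v : K) - 1‖ ≤ c ^ (N + 1) ∧
      Tendsto (fun n => ((xt n ^ p ^ n : Kˣ) : Kˣ ⧸ Subgroup.zpowers q')) atTop
        (𝓝 (↑(xt N ^ p ^ N) * ↑v)) := by
  choose u hu hstep using exists_mk_pow_succ_eq_mul (q' := q') hp hc hpc hζ hqζ x hxt
  have hc₀ : 0 ≤ c := (norm_nonneg _).trans hpc
  have hu' : ∀ n, ‖(u (n + N) : K) - 1‖ ≤ c ^ (N + 1) * c ^ n := fun n =>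
    (hu (n + N)).trans_eq (by ring)
  obtain ⟨v, hv, hlim⟩ := QuotientGroup.exists_tendsto_of_eq_mul_mk
    (Y := fun n => ((xt (n + N) ^ p ^ (n + N) : Kˣ) : Kˣ ⧸ Subgroup.zpowers q'))
    (pow_lt_one₀ hc₀ hc N.succ_ne_zero) hc₀ hc hu' fun n => by
      simpa only [add_right_comm n 1 N] using hstep (n + N)
  exact ⟨v, hv, (tendsto_add_atTop_iff_nat N).1 (by simpa using hlim)⟩

theorem tendsto_mk_pow_of_mk_eq (hp : p.Prime) (hc : c < 1) (hpc : ‖(p : K)‖ ≤ c)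
    (hζ : ‖(ζ : K) - 1‖ ≤ c) (hqζ : q = q' * ζ) {xt yt : ℕ → Kˣ}
    (hxy : ∀ n, (xt n : Kˣ ⧸ Subgroup.zpowers q) = yt n) {A : Kˣ ⧸ Subgroup.zpowers q'}
    (hy : Tendsto (fun n => ((yt n ^ p ^ n : Kˣ) : Kˣ ⧸ Subgroup.zpowers q')) atTop (𝓝 A)) :
    Tendsto (fun n => ((xt n ^ p ^ n : Kˣ) : Kˣ ⧸ Subgroup.zpowers q')) atTop (𝓝 A) := by
  choose m hm using fun n => QuotientGroup.exists_mk_pow_eq_of_mk_eq hqζ (hxy n) (p ^ n)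
  have hc₀ : 0 ≤ c := (norm_nonneg _).trans hpc
  have hone : Tendsto (fun n => (ζ ^ p ^ n) ^ m n) atTop (𝓝 1) :=
    Units.tendsto_one_of_norm_sub_one_le
      ((tendsto_pow_atTop_nhds_zero_of_lt_one hc₀ hc).comp (tendsto_add_atTop_nat 1))
      fun n => Units.norm_zpow_pow_prime_pow_sub_one_le hp hc hpc hζ n (m n)
  have := hy.mul ((QuotientGroup.continuous_mk.tendsto 1).comp hone)
  rw [QuotientGroup.mk_one, mul_one A] at this
  exact (tendsto_congr hm).2 this

noncomputable def powLimit (q' : Kˣ) (x : padicUniversalCover K p q) :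
    Kˣ ⧸ Subgroup.zpowers q' :=
  limUnder atTop fun n => ((x.1 n).out ^ p ^ n : Kˣ)

theorem tendsto_powLimit [CompleteSpace K] (hp : p.Prime) (hc : c < 1) (hpc : ‖(p : K)‖ ≤ c)
    (hζ : ‖(ζ : K) - 1‖ ≤ c) (hqζ : q = q' * ζ) (x : padicUniversalCover K p q) (xt : ℕ → Kˣ)
    (hxt : ∀ n, (xt n : Kˣ ⧸ Subgroup.zpowers q) = x.1 n) :
    Tendsto (fun n => ((xt n ^ p ^ n : Kˣ) : Kˣ ⧸ Subgroup.zpowers q')) atTop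
      (𝓝 (powLimit q' x)) := by
  have hout : ∀ n, ((x.1 n).out : Kˣ ⧸ Subgroup.zpowers q) = x.1 n := fun n =>
    QuotientGroup.out_eq' _
  obtain ⟨_, _, hlim⟩ := exists_tendsto_mk_pow (q' := q') hp hc hpc hζ hqζ x hout 0
  exact tendsto_mk_pow_of_mk_eq hp hc hpc hζ hqζ (fun n => (hxt n).trans (hout n).symm)
    (tendsto_nhds_limUnder ⟨_, hlim⟩)

theorem powLimit_mul [CompleteSpace K] [T2Space (Kˣ ⧸ Subgroup.zpowers q')] (hp : p.Prime)
    (hc : c < 1) (hpc : ‖(p : K)‖ ≤ c) (hζ : ‖(ζ : K) - 1‖ ≤ c) (hqζ : q = q' * ζ)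
    (x y : padicUniversalCover K p q) :
    powLimit q' (x * y) = powLimit q' x * powLimit q' y := by
  have hout : ∀ (z : padicUniversalCover K p q) n,
      ((z.1 n).out : Kˣ ⧸ Subgroup.zpowers q) = z.1 n := fun _ _ => QuotientGroup.out_eq' _
  have hxy : ∀ n, (((x.1 n).out * (y.1 n).out : Kˣ) : Kˣ ⧸ Subgroup.zpowers q) = (x * y).1 n :=
    fun n => by rw [QuotientGroup.mk_mul, hout, hout]; rfl
  refine tendsto_nhds_unique (tendsto_powLimit hp hc hpc hζ hqζ _ _ hxy) ?_
  simpa only [mul_pow, QuotientGroup.mk_mul] using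
    (tendsto_powLimit hp hc hpc hζ hqζ x _ (hout x)).mul
      (tendsto_powLimit hp hc hpc hζ hqζ y _ (hout y))

theorem eventually_powLimit_eq_mk [CompleteSpace K] [T2Space (Kˣ ⧸ Subgroup.zpowers q')]
    (hp : p.Prime) (hc₀ : 0 < c) (hc : c < 1) (hpc : ‖(p : K)‖ ≤ c) (hζ : ‖(ζ : K) - 1‖ ≤ c)
    (hqζ : q = q' * ζ) (N : ℕ) :
    ∀ᶠ x in 𝓝 (1 : padicUniversalCover K p q),
      ∃ u : Kˣ, ‖(u : K) - 1‖ ≤ c ^ (N + 1) ∧ powLimit q' x = u := by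
  set B : Set (Kˣ ⧸ Subgroup.zpowers q) := QuotientGroup.mk '' {t : Kˣ | ‖(t : K) - 1‖ < c}
  have hB : IsOpen B := QuotientGroup.isOpenMap_coe _ (isOpen_lt (by fun_prop) continuous_const)
  have h1B : (1 : padicUniversalCover K p q).1 N ∈ B := ⟨1, by simpa using hc₀, rfl⟩
  filter_upwards [((continuous_apply N).comp continuous_subtype_val).continuousAt.preimage_mem_nhds
    (hB.mem_nhds h1B)] with x ⟨t, ht, hxN⟩
  set xt : ℕ → Kˣ := Function.update (fun n => (x.1 n).out) N t
  have hxt : ∀ n, (xt n : Kˣ ⧸ Subgroup.zpowers q) = x.1 n := by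
    intro n
    rcases eq_or_ne n N with rfl | hn
    · simp [xt, hxN]
    · simp [xt, hn]
  obtain ⟨v, hv, hlim⟩ := exists_tendsto_mk_pow (q' := q') hp hc hpc hζ hqζ x hxt N
  have ht' : ‖((t ^ p ^ N : Kˣ) : K) - 1‖ ≤ c ^ (N + 1) := by
    simpa using norm_pow_prime_pow_sub_one_le hp hc.le hpc ht.le N
  refine ⟨t ^ p ^ N * v, ?_, ?_⟩
  · rw [Units.val_mul]
    exact (norm_mul_sub_one_le_max (norm_eq_one_of_norm_sub_one_lt_one
      (ht'.trans_lt (pow_lt_one₀ hc₀.le hc N.succ_ne_zero))).le).trans (max_le ht' hv)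
  · rw [QuotientGroup.mk_mul]
    simpa [xt] using tendsto_nhds_unique (tendsto_powLimit hp hc hpc hζ hqζ x xt hxt) hlim

theorem tendsto_powLimit_nhds_one [CompleteSpace K] [T2Space (Kˣ ⧸ Subgroup.zpowers q')]
    (hp : p.Prime) (hc₀ : 0 < c) (hc : c < 1) (hpc : ‖(p : K)‖ ≤ c) (hζ : ‖(ζ : K) - 1‖ ≤ c)
    (hqζ : q = q' * ζ) :
    Tendsto (powLimit q') (𝓝 (1 : padicUniversalCover K p q)) (𝓝 1) := by
  have hbasis := Units.nhds_one_hasBasis.map (QuotientGroup.mk (s := Subgroup.zpowers q'))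
  rw [← QuotientGroup.nhds_eq, QuotientGroup.mk_one] at hbasis
  refine hbasis.tendsto_right_iff.2 fun ε hε => ?_
  obtain ⟨N, hN⟩ := exists_pow_lt_of_lt_one hε hc
  filter_upwards [eventually_powLimit_eq_mk hp hc₀ hc hpc hζ hqζ N] with x ⟨u, hu, hx⟩
  exact ⟨u, (hu.trans (pow_le_pow_of_le_one hc₀.le hc.le N.le_succ)).trans_lt hN, hx.symm⟩

end padicUniversalCover

/-- There is a continuous group homomorphism `lim_{[p]} Kˣ/q^ℤ → Kˣ/q'^ℤ` sending a
compatible sequence `(xₙ)` to the limit of `x̃ₙ^{pⁿ} mod q'^ℤ`, for any choice of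
lifts `x̃ₙ ∈ Kˣ` of the `xₙ`. -/
theorem exists_continuous_hom_padicUniversalCover
    (K : Type*) [NormedField K] [CompleteSpace K]
    (hu : ∀ a b : K, ‖a + b‖ ≤ max ‖a‖ ‖b‖)
    (p : ℕ) (hp : p.Prime) (hpK : ‖(p : K)‖ < 1)
    (q' : Kˣ) (hq' : ‖(q' : K)‖ < 1)
    (z : K) (hz : ‖z - 1‖ < 1)
    (q : Kˣ) (hq : (q : K) = (q' : K) * z) :
    ∃ f : padicUniversalCover K p q →* Kˣ ⧸ Subgroup.zpowers q',
      Continuous f ∧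
      ∀ (x : padicUniversalCover K p q) (xt : ℕ → Kˣ),
        (∀ n : ℕ, (QuotientGroup.mk (xt n) : Kˣ ⧸ Subgroup.zpowers q) = x.1 n) →
        Filter.Tendsto
          (fun n : ℕ => (QuotientGroup.mk (xt n ^ p ^ n) : Kˣ ⧸ Subgroup.zpowers q'))
          Filter.atTop (nhds (f x)) := by
  have : IsUltrametricDist K := .isUltrametricDist_of_forall_norm_add_le_max_norm hu
  have : DiscreteTopology (Subgroup.zpowers q') := Units.discreteTopology_zpowers hq'.ne
  set ζ : Kˣ := q'⁻¹ * q
  have hqζ : q = q' * ζ := (mul_inv_cancel_left q' q).symm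
  have hζz : (ζ : K) = z := by simp [ζ, hq]
  obtain ⟨c, hc₀, hc, hpc, hζ⟩ : ∃ c : ℝ, 0 < c ∧ c < 1 ∧ ‖(p : K)‖ ≤ c ∧ ‖(ζ : K) - 1‖ ≤ c :=
    ⟨max (max ‖(p : K)‖ ‖z - 1‖) (1 / 2), by positivity, max_lt (max_lt hpK hz) (by norm_num),
      by simp, by simp [hζz]⟩
  let f : padicUniversalCover K p q →* Kˣ ⧸ Subgroup.zpowers q' :=
    MonoidHom.mk' _ (padicUniversalCover.powLimit_mul hp hc hpc hζ hqζ)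
  refine ⟨f, continuous_of_continuousAt_one f ?_,
    padicUniversalCover.tendsto_powLimit hp hc hpc hζ hqζ⟩
  rw [ContinuousAt, map_one]
  exact padicUniversalCover.tendsto_powLimit_nhds_one hp hc₀ hc hpc hζ hqζ
end

section
/- There exists an isomorphism of topological groups lim_{[p]} Kˣ/q^ℤ ≅ lim_{[p]} Kˣ/q'^ℤ, i.e. a group isomorphism between the two p-adic universal covers which is simultaneously a homeomorphism. -/
open Filter Topology
open scoped NNReal

-- `padicUniversalCover K p u` is definitionally `powInverseLimit (Kˣ ⧸ Subgroup.zpowers u) p`.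
def powInverseLimit (G : Type*) [CommGroup G] (p : ℕ) : Subgroup (ℕ → G) where
  carrier := {x | ∀ n, x n = x (n + 1) ^ p}
  one_mem' _ := by simp
  mul_mem' ha hb n := by simp only [Pi.mul_apply, ha n, hb n, mul_pow]
  inv_mem' ha n := by simp only [Pi.inv_apply, ha n, inv_pow]

theorem QuotientGroup.exists_mem_mk_eq_mk_mul_of_mk_sup_eq {G : Type*} [CommGroup G]
    {N Z : Subgroup G} {ξ η : G}
    (h : (ξ : G ⧸ (N ⊔ Z)) = η) : ∃ t ∈ Z, (ξ : G ⧸ N) = ↑(η * t) := by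
  obtain ⟨a, ha, t, ht, hat⟩ := Subgroup.mem_sup.mp (QuotientGroup.eq.mp h)
  refine ⟨t⁻¹, Z.inv_mem ht, QuotientGroup.eq.mpr ?_⟩
  rwa [← mul_assoc, ← hat, mul_inv_cancel_right]

namespace powInverseLimit

section Map

variable {G H : Type*} [CommGroup G] [CommGroup H] {p : ℕ}

theorem apply_eq_pow_apply_add {x : ℕ → G} (hx : x ∈ powInverseLimit G p) (n m : ℕ) :
    x n = x (n + m) ^ p ^ m := by
  induction m with
  | zero => simp
  | succ m ih => rw [ih, hx (n + m), ← pow_mul, ← pow_succ', ← add_assoc]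

def map (f : G →* H) : powInverseLimit G p →* powInverseLimit H p :=
  ((MonoidHom.compLeft f ℕ).comp (powInverseLimit G p).subtype).codRestrict _
    fun x n => by simp [x.2 n]

@[simp]
theorem map_apply (f : G →* H) (x : powInverseLimit G p) (n : ℕ) :
    (map f x : ℕ → H) n = f ((x : ℕ → G) n) := rfl

theorem continuous_map [TopologicalSpace G] [TopologicalSpace H] {f : G →* H}
    (hf : Continuous f) : Continuous (map (p := p) f) :=
  continuous_induced_rng.mpr <| continuous_pi fun n =>
    hf.comp ((continuous_apply n).comp continuous_subtype_val)

end Map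

section Quotient

variable {G : Type*} [CommGroup G] {p : ℕ} {N Z : Subgroup G}

variable (p) in
def quotientMap {M : Subgroup G} (h : N ≤ M) :
    powInverseLimit (G ⧸ N) p →* powInverseLimit (G ⧸ M) p :=
  map (QuotientGroup.map N M (MonoidHom.id G) h)

theorem quotientMap_apply_mk {M : Subgroup G} (h : N ≤ M) {x : powInverseLimit (G ⧸ N) p}
    {n : ℕ} {ξ : G} (hξ : (x : ℕ → G ⧸ N) n = ξ) : (quotientMap p h x : ℕ → G ⧸ M) n = ξ := by
  rw [quotientMap, map_apply, hξ]
  rfl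

theorem quotientMap_injective (hNZ : Disjoint N Z)
    (htriv : ∀ t ∈ powInverseLimit G p, (∀ n, t n ∈ Z) → t = 1) :
    Function.Injective (quotientMap p (le_sup_left : N ≤ N ⊔ Z)) := by
  rw [injective_iff_map_eq_one]
  intro x hx
  have hrep : ∀ n, ∃ t ∈ Z, (x : ℕ → G ⧸ N) n = t := by
    intro n
    obtain ⟨ξ, hξ⟩ := QuotientGroup.mk_surjective ((x : ℕ → G ⧸ N) n)
    have h1 : (ξ : G ⧸ (N ⊔ Z)) = (1 : G) := by
      rw [← quotientMap_apply_mk le_sup_left hξ.symm, hx]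
      rfl
    obtain ⟨t, ht, hξt⟩ := QuotientGroup.exists_mem_mk_eq_mk_mul_of_mk_sup_eq h1
    exact ⟨t, ht, by rw [← hξ, hξt, one_mul]⟩
  choose t htZ hxt using hrep
  have ht : t ∈ powInverseLimit G p := fun n => by
    have h := x.2 n
    rw [hxt n, hxt (n + 1), ← QuotientGroup.mk_pow, QuotientGroup.eq] at h
    have hmemZ := Z.mul_mem (Z.inv_mem (htZ n)) (Z.pow_mem (htZ (n + 1)) p)
    exact inv_mul_eq_one.mp (Subgroup.mem_bot.mp (hNZ.le_bot ⟨h, hmemZ⟩))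
  ext n
  simp [hxt n, htriv t ht htZ]

theorem quotientMap_surjective (hsolve : ∀ t : ℕ → G, (∀ n, t n ∈ Z) →
      ∃ ζ : ℕ → G, (∀ n, ζ n ∈ Z) ∧ ∀ n, ζ n = t n * ζ (n + 1) ^ p) :
    Function.Surjective (quotientMap p (le_sup_left : N ≤ N ⊔ Z)) := by
  intro y
  choose ξ hξ using fun n => QuotientGroup.mk_surjective ((y : ℕ → G ⧸ (N ⊔ Z)) n)
  have hrel : ∀ n, ∃ t ∈ Z, (ξ n : G ⧸ N) = ↑(ξ (n + 1) ^ p * t) := fun n =>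
    QuotientGroup.exists_mem_mk_eq_mk_mul_of_mk_sup_eq <| by
      rw [hξ, QuotientGroup.mk_pow, hξ]
      exact y.2 n
  choose t htZ hξt using hrel
  obtain ⟨ζ, hζZ, hζ⟩ := hsolve t htZ
  refine ⟨⟨fun n => ↑(ξ n * (ζ n)⁻¹), fun n => ?_⟩, ?_⟩
  · show ((ξ n * (ζ n)⁻¹ : G) : G ⧸ N) = ((ξ (n + 1) * (ζ (n + 1))⁻¹ : G) : G ⧸ N) ^ p
    rw [QuotientGroup.mk_mul, hξt n, ← QuotientGroup.mk_mul, ← QuotientGroup.mk_pow, hζ n]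
    rw [mul_inv, mul_pow, inv_pow]
    group
  · ext n
    rw [quotientMap_apply_mk le_sup_left rfl, QuotientGroup.mk_mul, ← hξ n,
      (QuotientGroup.eq_one_iff _).mpr (Subgroup.mem_sup_right (Z.inv_mem (hζZ n))), mul_one]

variable [TopologicalSpace G]

theorem eq_one_of_forall_pow_pow_mem_nhds [T1Space G]
    (hpow : ∀ V ∈ 𝓝 (1 : G), ∃ m, ∀ t ∈ Z, t ^ p ^ m ∈ V)
    {t : ℕ → G} (ht : t ∈ powInverseLimit G p) (htZ : ∀ n, t n ∈ Z) : t = 1 := by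
  funext n
  by_contra hne
  obtain ⟨m, hm⟩ := hpow _ (isOpen_compl_singleton.mem_nhds (Ne.symm hne))
  exact hm _ (htZ (n + m)) (apply_eq_pow_apply_add ht n m).symm

theorem continuous_quotientMap {M : Subgroup G} (h : N ≤ M) : Continuous (quotientMap p h) :=
  continuous_map ((QuotientGroup.isQuotientMap_mk N).continuous_iff.mpr QuotientGroup.continuous_mk)

variable [IsTopologicalGroup G]

theorem continuous_symm_of_forall_pow_pow_mem_nhds
    (hpow : ∀ V ∈ 𝓝 (1 : G), ∃ m, ∀ t ∈ Z, t ^ p ^ m ∈ V)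
    (e : powInverseLimit (G ⧸ N) p ≃* powInverseLimit (G ⧸ (N ⊔ Z)) p)
    (he : ⇑e = quotientMap p le_sup_left) : Continuous e.symm := by
  refine continuous_of_continuousAt_one e.symm ?_
  rw [ContinuousAt, map_one, tendsto_subtype_rng, tendsto_pi_nhds]
  intro n S hS
  obtain ⟨V, hV, hVV⟩ := exists_nhds_one_split (QuotientGroup.continuous_mk.tendsto 1 hS)
  obtain ⟨m, hm⟩ := hpow V hV
  have hW : (· ^ p ^ m) ⁻¹' V ∈ 𝓝 (1 : G) :=
    (continuous_pow (p ^ m)).tendsto' 1 1 (one_pow _) hV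
  have hW' : (QuotientGroup.mk '' ((· ^ p ^ m) ⁻¹' V) : Set (G ⧸ (N ⊔ Z))) ∈ 𝓝 1 :=
    QuotientGroup.isOpenMap_coe.image_mem_nhds hW
  have hU : {y : powInverseLimit (G ⧸ (N ⊔ Z)) p | (y : ℕ → G ⧸ (N ⊔ Z)) (n + m) ∈
      QuotientGroup.mk '' ((· ^ p ^ m) ⁻¹' V)} ∈ 𝓝 1 :=
    ((continuous_apply (n + m)).comp continuous_subtype_val).continuousAt.preimage_mem_nhds hW'
  refine Filter.mem_map.mpr (Filter.mem_of_superset hU ?_)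
  rintro y ⟨β, hβW, hβ⟩
  obtain ⟨ξ, hξ⟩ := QuotientGroup.mk_surjective ((e.symm y : ℕ → G ⧸ N) (n + m))
  have hξβ : (ξ : G ⧸ (N ⊔ Z)) = β := by
    rw [← quotientMap_apply_mk le_sup_left hξ.symm, ← he, e.apply_symm_apply, hβ]
  obtain ⟨t, ht, hξt⟩ := QuotientGroup.exists_mem_mk_eq_mk_mul_of_mk_sup_eq hξβ
  show (e.symm y : ℕ → G ⧸ N) n ∈ S
  rw [apply_eq_pow_apply_add (e.symm y).2 n m, ← hξ, hξt, ← QuotientGroup.mk_pow, mul_pow]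
  exact hVV _ hβW _ (hm t ht)

theorem exists_continuous_mulEquiv_of_sup_eq [T1Space G] {M : Subgroup G} (hM : N ⊔ Z = M)
    (hNZ : Disjoint N Z)
    (hpow : ∀ V ∈ 𝓝 (1 : G), ∃ m, ∀ t ∈ Z, t ^ p ^ m ∈ V)
    (hsolve : ∀ t : ℕ → G, (∀ n, t n ∈ Z) →
      ∃ ζ : ℕ → G, (∀ n, ζ n ∈ Z) ∧ ∀ n, ζ n = t n * ζ (n + 1) ^ p) :
    ∃ e : powInverseLimit (G ⧸ N) p ≃* powInverseLimit (G ⧸ M) p,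
      Continuous e ∧ Continuous e.symm := by
  subst hM
  let e := MulEquiv.ofBijective (quotientMap p (le_sup_left : N ≤ N ⊔ Z))
    ⟨quotientMap_injective hNZ fun _ ht htZ => eq_one_of_forall_pow_pow_mem_nhds hpow ht htZ,
      quotientMap_surjective hsolve⟩
  exact ⟨e, continuous_quotientMap _, continuous_symm_of_forall_pow_pow_mem_nhds hpow e rfl⟩

end Quotient

end powInverseLimit

theorem Subgroup.zpowers_sup_eq_zpowers_sup {G : Type*} [Group G] {H : Subgroup G} {a b : G}
    (h : a⁻¹ * b ∈ H) : zpowers a ⊔ H = zpowers b ⊔ H := by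
  have key : ∀ x y : G, x⁻¹ * y ∈ H → zpowers y ⊔ H ≤ zpowers x ⊔ H := by
    intro x y hxy
    refine sup_le (zpowers_le.mpr ?_) le_sup_right
    simpa using mul_mem (mem_sup_left (mem_zpowers x)) (mem_sup_right (S := zpowers x) hxy)
  exact le_antisymm (key b a (by simpa using inv_mem h)) (key a b h)

section Ultrametric

variable {K : Type*} [NormedField K]

theorem Units.hasBasis_nhds_one_norm_sub_one_lt :
    (𝓝 (1 : Kˣ)).HasBasis (fun ε : ℝ => 0 < ε) fun ε => {u : Kˣ | ‖(u : K) - 1‖ < ε} := by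
  rw [Units.isEmbedding_val₀.nhds_eq_comap, Units.val_one]
  exact (Metric.nhds_basis_ball (x := (1 : K))).comap _ |>.congr (fun _ => Iff.rfl)
    fun ε _ => by ext u; simp [dist_eq_norm]

variable [IsUltrametricDist K]

theorem norm_eq_one_of_norm_sub_one_lt {x : K} (hx : ‖x - 1‖ < 1) : ‖x‖ = 1 := by
  have h := IsUltrametricDist.norm_add_eq_max_of_norm_ne_norm (x := x - 1) (y := 1)
    (by rw [norm_one]; exact hx.ne)
  rwa [sub_add_cancel, norm_one, max_eq_right hx.le] at h

theorem norm_mul_sub_one_le {x y : K} (hy : ‖y‖ ≤ 1) : ‖x * y - 1‖ ≤ max ‖x - 1‖ ‖y - 1‖ :=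
  calc ‖x * y - 1‖ = ‖(x - 1) * y + (y - 1)‖ := by ring_nf
    _ ≤ max ‖(x - 1) * y‖ ‖y - 1‖ := IsUltrametricDist.norm_add_le_max _ _
    _ ≤ max ‖x - 1‖ ‖y - 1‖ := by
      rw [norm_mul]
      exact max_le_max_right _ (mul_le_of_le_one_right (norm_nonneg _) hy)

theorem norm_pow_sub_one_le {x : K} (hx : ‖x - 1‖ < 1) (k : ℕ) : ‖x ^ k - 1‖ ≤ ‖x - 1‖ := by
  induction k with
  | zero => simp
  | succ k ih =>
    rw [pow_succ]
    exact (norm_mul_sub_one_le (norm_eq_one_of_norm_sub_one_lt hx).le).trans (max_le ih le_rfl)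

theorem norm_pow_sub_one_le_max_mul {x : K} (hx : ‖x - 1‖ < 1) (p : ℕ) :
    ‖x ^ p - 1‖ ≤ max ‖(p : K)‖ ‖x - 1‖ * ‖x - 1‖ := by
  have hsum : ∑ k ∈ Finset.range p, x ^ k = p + ∑ k ∈ Finset.range p, (x ^ k - 1) := by
    simp [Finset.sum_sub_distrib]
  rw [← geom_sum_mul, norm_mul, hsum]
  refine mul_le_mul_of_nonneg_right ((IsUltrametricDist.norm_add_le_max _ _).trans
    (max_le_max_left _ ?_)) (norm_nonneg _)
  exact IsUltrametricDist.norm_sum_le_of_forall_le_of_nonneg (norm_nonneg _)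
    fun k _ => norm_pow_sub_one_le hx k

theorem norm_pow_pow_sub_one_le {x : K} {r : ℝ} (hx : ‖x - 1‖ ≤ r) (hr : r < 1) (p m : ℕ) :
    ‖x ^ p ^ m - 1‖ ≤ max ‖(p : K)‖ r ^ m * r := by
  have hr0 : 0 ≤ r := (norm_nonneg _).trans hx
  have hc0 : 0 ≤ max ‖(p : K)‖ r := le_max_of_le_right hr0
  have hc1 : max ‖(p : K)‖ r ≤ 1 :=
    max_le (IsUltrametricDist.norm_natCast_le_one K p) hr.le
  induction m with
  | zero => simpa using hx
  | succ m ih =>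
    have hm : ‖x ^ p ^ m - 1‖ ≤ r := ih.trans (mul_le_of_le_one_left hr0 (pow_le_one₀ hc0 hc1))
    calc ‖x ^ p ^ (m + 1) - 1‖ = ‖(x ^ p ^ m) ^ p - 1‖ := by rw [pow_succ, pow_mul]
      _ ≤ max ‖(p : K)‖ ‖x ^ p ^ m - 1‖ * ‖x ^ p ^ m - 1‖ :=
        norm_pow_sub_one_le_max_mul (hm.trans_lt hr) p
      _ ≤ max ‖(p : K)‖ r * (max ‖(p : K)‖ r ^ m * r) :=
        mul_le_mul (max_le_max_left _ hm) ih (norm_nonneg _) hc0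
      _ = max ‖(p : K)‖ r ^ (m + 1) * r := by ring

end Ultrametric

section OneUnits

variable {K : Type*} [NormedField K] [IsUltrametricDist K]

variable (K) in
def oneUnitsClosedBall (r : ℝ≥0) (hr : r < 1) : Subgroup Kˣ where
  carrier := {u | ‖(u : K) - 1‖ ≤ r}
  one_mem' := by simp
  mul_mem' {a b} ha hb := by
    have hb1 := norm_eq_one_of_norm_sub_one_lt (hb.trans_lt hr)
    simpa using (norm_mul_sub_one_le hb1.le).trans (max_le ha hb)
  inv_mem' {a} ha := by
    have ha1 := norm_eq_one_of_norm_sub_one_lt (ha.trans_lt hr)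
    have h : ((a⁻¹ : Kˣ) : K) - 1 = (a⁻¹ : Kˣ) * (1 - a) := by
      rw [mul_sub, mul_one, Units.inv_mul]
    change ‖((a⁻¹ : Kˣ) : K) - 1‖ ≤ r
    rwa [h, norm_mul, norm_sub_rev, Units.val_inv_eq_inv_val, norm_inv, ha1, inv_one, one_mul]

variable {r : ℝ≥0} {hr : r < 1}

theorem mem_oneUnitsClosedBall {u : Kˣ} : u ∈ oneUnitsClosedBall K r hr ↔ ‖(u : K) - 1‖ ≤ r :=
  Iff.rfl

theorem disjoint_zpowers_oneUnitsClosedBall {q : Kˣ} (hq : ‖(q : K)‖ < 1) :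
    Disjoint (Subgroup.zpowers q) (oneUnitsClosedBall K r hr) := by
  rw [Subgroup.disjoint_def]
  rintro _ ⟨k, rfl⟩ hk
  have h1 : ‖(q : K)‖ ^ k = 1 := by
    rw [← norm_zpow, ← Units.val_zpow_eq_zpow_val]
    exact norm_eq_one_of_norm_sub_one_lt (hk.trans_lt hr)
  rw [zpow_eq_one_iff_right₀ (norm_nonneg _) hq.ne] at h1
  simp [h1]

variable {p : ℕ}

theorem forall_pow_pow_mem_of_mem_nhds_one (hp : ‖(p : K)‖ < 1) {V : Set Kˣ} (hV : V ∈ 𝓝 1) :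
    ∃ m, ∀ t ∈ oneUnitsClosedBall K r hr, t ^ p ^ m ∈ V := by
  obtain ⟨ε, hε, hεV⟩ := Units.hasBasis_nhds_one_norm_sub_one_lt.mem_iff.mp hV
  have hlim : Tendsto (fun m : ℕ => max ‖(p : K)‖ r ^ m * r) atTop (𝓝 0) := by
    simpa using (tendsto_pow_atTop_nhds_zero_of_lt_one (le_max_of_le_right r.2)
      (max_lt hp hr)).mul_const (r : ℝ)
  obtain ⟨m, hm⟩ := (hlim.eventually_lt_const hε).exists
  refine ⟨m, fun t ht => hεV ?_⟩
  simpa using (norm_pow_pow_sub_one_le ht hr p m).trans_lt hm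

end OneUnits

theorem Finset.prod_range_succ_pow_pow {M : Type*} [CommMonoid M] (s : ℕ → M) (p m : ℕ) :
    ∏ j ∈ range (m + 1), s j ^ p ^ j = s 0 * (∏ j ∈ range m, s (j + 1) ^ p ^ j) ^ p := by
  rw [prod_range_succ', pow_zero, pow_one, mul_comm, ← prod_pow]
  congr 1
  exact prod_congr rfl fun j _ => by rw [← pow_mul, pow_succ]

section OneUnitsComplete

variable {K : Type*} [NormedField K] [IsUltrametricDist K] [CompleteSpace K]
  {r : ℝ≥0} {hr : r < 1} {p : ℕ}

theorem exists_mem_oneUnitsClosedBall_tendsto {P : ℕ → Kˣ}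
    (hP : ∀ m, P m ∈ oneUnitsClosedBall K r hr) (hc : CauchySeq fun m => (P m : K)) :
    ∃ ζ ∈ oneUnitsClosedBall K r hr, Tendsto P atTop (𝓝 ζ) := by
  obtain ⟨L, hL⟩ := cauchySeq_tendsto_of_complete hc
  have hL1 : ‖L - 1‖ ≤ r := le_of_tendsto (hL.sub_const 1).norm (Eventually.of_forall hP)
  have hL0 : L ≠ 0 := by
    rintro rfl
    simp only [zero_sub, norm_neg, norm_one] at hL1
    exact hr.not_ge (by exact_mod_cast hL1)
  exact ⟨Units.mk0 L hL0, hL1, Units.isEmbedding_val₀.tendsto_nhds_iff.mpr hL⟩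

theorem exists_mem_oneUnitsClosedBall_tendsto_prod_range_pow_pow (hp : ‖(p : K)‖ < 1)
    {s : ℕ → Kˣ} (hs : ∀ j, s j ∈ oneUnitsClosedBall K r hr) :
    ∃ ζ ∈ oneUnitsClosedBall K r hr,
      Tendsto (fun m => ∏ j ∈ Finset.range m, s j ^ p ^ j) atTop (𝓝 ζ) := by
  have hP : ∀ m, ∏ j ∈ Finset.range m, s j ^ p ^ j ∈ oneUnitsClosedBall K r hr :=
    fun m => Subgroup.prod_mem _ fun j _ => Subgroup.pow_mem _ (hs j) _
  refine exists_mem_oneUnitsClosedBall_tendsto hP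
    (cauchySeq_of_le_geometric (max ‖(p : K)‖ r) r (max_lt hp hr) fun m => ?_)
  set P : K := ((∏ j ∈ Finset.range m, s j ^ p ^ j : Kˣ) : K)
  have hP1 : ‖P‖ = 1 := norm_eq_one_of_norm_sub_one_lt ((hP m).trans_lt hr)
  have hdiff : P - P * (s m : K) ^ p ^ m = P * (1 - (s m : K) ^ p ^ m) := by ring
  rw [Finset.prod_range_succ, dist_eq_norm, Units.val_mul, Units.val_pow_eq_pow_val, hdiff,
    norm_mul, hP1, one_mul, norm_sub_rev, mul_comm]
  exact norm_pow_pow_sub_one_le (hs m) hr p m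

theorem exists_forall_mem_oneUnitsClosedBall_eq_mul_pow (hp : ‖(p : K)‖ < 1) (t : ℕ → Kˣ)
    (ht : ∀ n, t n ∈ oneUnitsClosedBall K r hr) :
    ∃ ζ : ℕ → Kˣ, (∀ n, ζ n ∈ oneUnitsClosedBall K r hr) ∧ ∀ n, ζ n = t n * ζ (n + 1) ^ p := by
  choose ζ hζZ hζ using fun n =>
    exists_mem_oneUnitsClosedBall_tendsto_prod_range_pow_pow hp (s := fun j => t (n + j))
      fun j => ht (n + j)
  refine ⟨ζ, hζZ, fun n => tendsto_nhds_unique ((hζ n).comp (tendsto_add_atTop_nat 1)) ?_⟩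
  convert tendsto_const_nhds.mul ((hζ (n + 1)).pow p) using 2 with m
  simp [Finset.prod_range_succ_pow_pow, add_assoc, add_comm 1]

end OneUnitsComplete

theorem exists_topologicalGroup_iso_padicUniversalCover_general
    (K : Type*) [NormedField K] [CompleteSpace K]
    (hu : ∀ a b : K, ‖a + b‖ ≤ max ‖a‖ ‖b‖)
    (p : ℕ) (hpK : ‖(p : K)‖ < 1)
    (q' : Kˣ) (hq' : ‖(q' : K)‖ < 1)
    (z : K) (hz : ‖z - 1‖ < 1)
    (q : Kˣ) (hq : (q : K) = (q' : K) * z) :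
    ∃ e : padicUniversalCover K p q ≃* padicUniversalCover K p q',
      Continuous e ∧ Continuous e.symm := by
  have : IsUltrametricDist K := .isUltrametricDist_of_forall_norm_add_le_max_norm hu
  have hz' : ‖z - 1‖₊ < 1 := by exact_mod_cast hz
  let Z := oneUnitsClosedBall K ‖z - 1‖₊ hz'
  have hzZ : q'⁻¹ * q ∈ Z := by
    rw [mem_oneUnitsClosedBall, Units.val_mul, Units.val_inv_eq_inv_val, hq,
      inv_mul_cancel_left₀ q'.ne_zero, coe_nnnorm]
  have hq1 : ‖(q : K)‖ < 1 := by
    rwa [hq, norm_mul, norm_eq_one_of_norm_sub_one_lt hz, mul_one]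
  obtain ⟨e, he, he'⟩ := powInverseLimit.exists_continuous_mulEquiv_of_sup_eq (p := p)
    (Subgroup.zpowers_sup_eq_zpowers_sup hzZ).symm (disjoint_zpowers_oneUnitsClosedBall hq1)
    (fun _ => forall_pow_pow_mem_of_mem_nhds_one hpK)
    (exists_forall_mem_oneUnitsClosedBall_eq_mul_pow hpK)
  obtain ⟨f, hf, hf'⟩ := powInverseLimit.exists_continuous_mulEquiv_of_sup_eq (p := p) rfl
    (disjoint_zpowers_oneUnitsClosedBall hq') (fun _ => forall_pow_pow_mem_of_mem_nhds_one hpK)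
    (exists_forall_mem_oneUnitsClosedBall_eq_mul_pow hpK)
  exact ⟨e.trans f.symm, hf'.comp he, he'.comp hf⟩

/-- If `q = q'·z` with `‖z - 1‖ < 1`, then the `p`-adic universal covers of the Tate
curves `Kˣ/q^ℤ` and `Kˣ/q'^ℤ` are isomorphic as topological groups: there is a group
isomorphism which is also a homeomorphism. -/
theorem exists_topologicalGroup_iso_padicUniversalCover
    (K : Type*) [NormedField K] [CompleteSpace K]
    (hu : ∀ a b : K, ‖a + b‖ ≤ max ‖a‖ ‖b‖)
    (p : ℕ) (hp : p.Prime) (hpK : ‖(p : K)‖ < 1)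
    (q' : Kˣ) (hq' : ‖(q' : K)‖ < 1)
    (z : K) (hz : ‖z - 1‖ < 1)
    (q : Kˣ) (hq : (q : K) = (q' : K) * z) :
    ∃ e : padicUniversalCover K p q ≃* padicUniversalCover K p q',
      Continuous e ∧ Continuous e.symm :=
  exists_topologicalGroup_iso_padicUniversalCover_general K hu p hpK q' hq' z hz q hq
end
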